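/- arXiv:math/0509173 — 13 statements merged into one kernel-verified Lean document; each statement's English description precedes it below -/
import Mathlib

section
/- Let U ⊆ ℂ be open, f₀, f₁ : U → ℂ holomorphic, and set B(x,y,p) = f₀(y)(y − x p)³ + f₁(y) p (y − x p)². Let a, β₁, α₃ ∈ ℂ, φ(y) = β₁ + α₃ y, and consider the vector field with components ξ(x,y) = (φ(y) + a)x and η(x,y) = φ(y)·y. Then ξ∂/∂x + η∂/∂y is an infinitesimal symmetry of y'' = B(x,y,y') (i.e., Lie's linearized symmetry condition holds for all x, p ∈ ℂ and y ∈ U) if and only if for all y ∈ U the two functional equations hold: (a + 3β₁)f₁(y) + 3α₃ y f₁(y) + (β₁ y + α₃ y²) f₁'(y) = 0 and (2a + 4β₁)f₀(y) + 3α₃ y f₀(y) + (β₁ y + α₃ y²) f₀'(y) = 0. -/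
/-- The right-hand side `B(x,y,p) = f₀(y)(y − x p)³ + f₁(y) p (y − x p)²`
of a shear-invariant second-order ODE. -/
noncomputable def shearB (f₀ f₁ : ℂ → ℂ) (x y p : ℂ) : ℂ :=
  f₀ y * (y - x * p) ^ 3 + f₁ y * p * (y - x * p) ^ 2

/-- `ξ`-component of the candidate isotropic symmetry: `ξ(x,y) = (φ(y) + a)·x`
with `φ(y) = β₁ + α₃·y`. -/
def shearXi (a β₁ α₃ x y : ℂ) : ℂ := ((β₁ + α₃ * y) + a) * x

/-- `η`-component of the candidate isotropic symmetry: `η(x,y) = φ(y)·y`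
with `φ(y) = β₁ + α₃·y`. -/
def shearEta (β₁ α₃ x y : ℂ) : ℂ := (β₁ + α₃ * y) * y

section ShearAux

lemma shearXi_deriv_x (a β₁ α₃ y : ℂ) (x : ℂ) :
    deriv (fun x' => shearXi a β₁ α₃ x' y) x = (β₁ + α₃ * y) + a := by
  simp only [shearXi]
  simpa using ((hasDerivAt_id x).const_mul ((β₁ + α₃ * y) + a)).deriv

lemma shearXi_deriv_y (a β₁ α₃ x : ℂ) (y : ℂ) :
    deriv (fun y' => shearXi a β₁ α₃ x y') y = α₃ * x := by
  simp only [shearXi]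
  have h : HasDerivAt (fun y' : ℂ => ((β₁ + α₃ * y') + a) * x) (α₃ * 1 * x) y :=
    ((((hasDerivAt_id y).const_mul α₃).const_add β₁).add_const a).mul_const x
  rw [h.deriv]; ring

lemma shearEta_deriv_x (β₁ α₃ y : ℂ) (x : ℂ) :
    deriv (fun x' => shearEta β₁ α₃ x' y) x = 0 := by
  simp [shearEta]

lemma shearEta_deriv_y (β₁ α₃ x : ℂ) (y : ℂ) :
    deriv (fun y' => shearEta β₁ α₃ x y') y = β₁ + 2 * α₃ * y := by
  simp only [shearEta]
  have h : HasDerivAt (fun y' : ℂ => (β₁ + α₃ * y') * y')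
      ((α₃ * 1) * y + (β₁ + α₃ * y) * 1) y :=
    (((hasDerivAt_id y).const_mul α₃).const_add β₁).mul (hasDerivAt_id y)
  rw [h.deriv]; ring

/-- The key algebraic identity: the Lie symmetry expression factors as
`(y-xp)^2 * ((y-xp)·E₀ + p·E₁)`. -/
lemma shear_key (U : Set ℂ) (hU : IsOpen U) (f₀ f₁ : ℂ → ℂ)
    (hf₀ : DifferentiableOn ℂ f₀ U) (hf₁ : DifferentiableOn ℂ f₁ U)
    (a β₁ α₃ : ℂ) (x p y : ℂ) (hy : y ∈ U) :
    shearXi a β₁ α₃ x y * deriv (fun x' => shearB f₀ f₁ x' y p) x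
        + shearEta β₁ α₃ x y * deriv (fun y' => shearB f₀ f₁ x y' p) y
        + (deriv (fun x' => shearEta β₁ α₃ x' y) x
            + p * (deriv (fun y' => shearEta β₁ α₃ x y') y
                    - deriv (fun x' => shearXi a β₁ α₃ x' y) x)
            - p ^ 2 * deriv (fun y' => shearXi a β₁ α₃ x y') y)
          * deriv (fun p' => shearB f₀ f₁ x y p') p
        + (2 * deriv (fun x' => shearXi a β₁ α₃ x' y) x
            + 3 * p * deriv (fun y' => shearXi a β₁ α₃ x y') y
            - deriv (fun y' => shearEta β₁ α₃ x y') y) * shearB f₀ f₁ x y p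
        - deriv (fun x' => deriv (fun x'' => shearEta β₁ α₃ x'' y) x') x
        + p * (deriv (fun x' => deriv (fun x'' => shearXi a β₁ α₃ x'' y) x') x
                - 2 * deriv (fun y' => deriv (fun x' => shearEta β₁ α₃ x' y') x) y)
        + p ^ 2 * (2 * deriv (fun y' => deriv (fun x' => shearXi a β₁ α₃ x' y') x) y
                - deriv (fun y' => deriv (fun y'' => shearEta β₁ α₃ x y'') y') y)
        + p ^ 3 * deriv (fun y' => deriv (fun y'' => shearXi a β₁ α₃ x y'') y') y
      = (y - x * p) ^ 2 * ((y - x * p) *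
          ((2 * a + 4 * β₁) * f₀ y + 3 * α₃ * y * f₀ y
             + (β₁ * y + α₃ * y ^ 2) * deriv f₀ y)
        + p * ((a + 3 * β₁) * f₁ y + 3 * α₃ * y * f₁ y
             + (β₁ * y + α₃ * y ^ 2) * deriv f₁ y)) := by
  -- second derivatives of ξ and η
  have hxi_xx : deriv (fun x' => deriv (fun x'' => shearXi a β₁ α₃ x'' y) x') x = 0 := by
    have : (fun x' => deriv (fun x'' => shearXi a β₁ α₃ x'' y) x')
        = fun _ : ℂ => (β₁ + α₃ * y) + a := funext fun x' => shearXi_deriv_x a β₁ α₃ y x'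
    rw [this, deriv_const]
  have hxi_xy : deriv (fun y' => deriv (fun x' => shearXi a β₁ α₃ x' y') x) y = α₃ := by
    have : (fun y' => deriv (fun x' => shearXi a β₁ α₃ x' y') x)
        = fun y' : ℂ => (β₁ + α₃ * y') + a := funext fun y' => shearXi_deriv_x a β₁ α₃ y' x
    rw [this]
    simpa using ((((hasDerivAt_id y).const_mul α₃).const_add β₁).add_const a).deriv
  have hxi_yy : deriv (fun y' => deriv (fun y'' => shearXi a β₁ α₃ x y'') y') y = 0 := by
    have : (fun y' => deriv (fun y'' => shearXi a β₁ α₃ x y'') y')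
        = fun _ : ℂ => α₃ * x := funext fun y' => shearXi_deriv_y a β₁ α₃ x y'
    rw [this, deriv_const]
  have heta_xx : deriv (fun x' => deriv (fun x'' => shearEta β₁ α₃ x'' y) x') x = 0 := by
    have : (fun x' => deriv (fun x'' => shearEta β₁ α₃ x'' y) x')
        = fun _ : ℂ => (0 : ℂ) := funext fun x' => shearEta_deriv_x β₁ α₃ y x'
    rw [this, deriv_const]
  have heta_xy : deriv (fun y' => deriv (fun x' => shearEta β₁ α₃ x' y') x) y = 0 := by
    have : (fun y' => deriv (fun x' => shearEta β₁ α₃ x' y') x)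
        = fun _ : ℂ => (0 : ℂ) := funext fun y' => shearEta_deriv_x β₁ α₃ y' x
    rw [this, deriv_const]
  have heta_yy : deriv (fun y' => deriv (fun y'' => shearEta β₁ α₃ x y'') y') y = 2 * α₃ := by
    have : (fun y' => deriv (fun y'' => shearEta β₁ α₃ x y'') y')
        = fun y' : ℂ => β₁ + 2 * α₃ * y' := funext fun y' => shearEta_deriv_y β₁ α₃ x y'
    rw [this]
    have h : HasDerivAt (fun y' : ℂ => β₁ + 2 * α₃ * y') (2 * α₃ * 1) y :=
      ((hasDerivAt_id y).const_mul (2 * α₃)).const_add β₁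
    rw [h.deriv]; ring
  -- derivatives of B
  have hd₀ : HasDerivAt f₀ (deriv f₀ y) y :=
    (hf₀.differentiableAt (hU.mem_nhds hy)).hasDerivAt
  have hd₁ : HasDerivAt f₁ (deriv f₁ y) y :=
    (hf₁.differentiableAt (hU.mem_nhds hy)).hasDerivAt
  have hux : HasDerivAt (fun x' : ℂ => y - x' * p) (-p) x := by
    simpa using ((hasDerivAt_id x).mul_const p).const_sub y
  have hup : HasDerivAt (fun p' : ℂ => y - x * p') (-x) p := by
    simpa using ((hasDerivAt_id p).const_mul x).const_sub y
  have huy : HasDerivAt (fun y' : ℂ => y' - x * p) 1 y := (hasDerivAt_id y).sub_const (x * p)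
  have hBx : deriv (fun x' => shearB f₀ f₁ x' y p) x
      = f₀ y * (3 * (y - x * p) ^ 2 * (-p)) + f₁ y * p * (2 * (y - x * p) * (-p)) := by
    have h : HasDerivAt (fun x' => shearB f₀ f₁ x' y p)
        (f₀ y * ((3 : ℕ) * (y - x * p) ^ (3 - 1) * (-p))
          + f₁ y * p * ((2 : ℕ) * (y - x * p) ^ (2 - 1) * (-p))) x := by
      simpa [shearB, Pi.add_def, Pi.mul_def, Pi.pow_def] using ((hux.pow 3).const_mul (f₀ y)).add ((hux.pow 2).const_mul (f₁ y * p))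
    rw [h.deriv]; push_cast; ring
  have hBp : deriv (fun p' => shearB f₀ f₁ x y p') p
      = f₀ y * (3 * (y - x * p) ^ 2 * (-x))
        + (f₁ y * (y - x * p) ^ 2 + f₁ y * p * (2 * (y - x * p) * (-x))) := by
    have h1 : HasDerivAt (fun p' : ℂ => f₁ y * p') (f₁ y) p := by
      simpa using (hasDerivAt_id p).const_mul (f₁ y)
    have h : HasDerivAt (fun p' => shearB f₀ f₁ x y p')
        (f₀ y * ((3 : ℕ) * (y - x * p) ^ (3 - 1) * (-x))
          + (f₁ y * (y - x * p) ^ 2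
             + f₁ y * p * ((2 : ℕ) * (y - x * p) ^ (2 - 1) * (-x)))) p := by
      simpa [shearB, Pi.add_def, Pi.mul_def, Pi.pow_def] using ((hup.pow 3).const_mul (f₀ y)).add (h1.mul (hup.pow 2))
    rw [h.deriv]; push_cast; ring
  have hBy : deriv (fun y' => shearB f₀ f₁ x y' p) y
      = (deriv f₀ y * (y - x * p) ^ 3 + f₀ y * (3 * (y - x * p) ^ 2))
        + (deriv f₁ y * p * (y - x * p) ^ 2 + f₁ y * p * (2 * (y - x * p))) := by
    have h : HasDerivAt (fun y' => shearB f₀ f₁ x y' p)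
        ((deriv f₀ y * (y - x * p) ^ 3
            + f₀ y * ((3 : ℕ) * (y - x * p) ^ (3 - 1) * 1))
          + (deriv f₁ y * p * (y - x * p) ^ 2
            + f₁ y * p * ((2 : ℕ) * (y - x * p) ^ (2 - 1) * 1))) y := by
      simpa [shearB, Pi.add_def, Pi.mul_def, Pi.pow_def] using (hd₀.mul (huy.pow 3)).add ((hd₁.mul_const p).mul (huy.pow 2))
    rw [h.deriv]; push_cast; ring
  rw [hBx, hBp, hBy, hxi_xx, hxi_xy, hxi_yy, heta_xx, heta_xy, heta_yy,
    shearXi_deriv_x, shearXi_deriv_y, shearEta_deriv_x, shearEta_deriv_y]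
  simp only [shearB, shearXi, shearEta]
  ring

end ShearAux

/-- With `φ(y) = β₁ + α₃ y`, the vector field `(φ(y)+a)x ∂/∂x + φ(y)y ∂/∂y` is an
infinitesimal symmetry of `y'' = f₀(y)(y − x y')³ + f₁(y) y' (y − x y')²`
(Lie's linearized symmetry condition) if and only if the two functional equations
`(a + 3β₁)f₁ + 3α₃ y f₁ + (β₁ y + α₃ y²) f₁' = 0` and
`(2a + 4β₁)f₀ + 3α₃ y f₀ + (β₁ y + α₃ y²) f₀' = 0` hold on `U`. -/
theorem shear_isotropic_symmetry_iff
    (U : Set ℂ) (hU : IsOpen U) (f₀ f₁ : ℂ → ℂ)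
    (hf₀ : DifferentiableOn ℂ f₀ U) (hf₁ : DifferentiableOn ℂ f₁ U)
    (a β₁ α₃ : ℂ) :
    (∀ x p : ℂ, ∀ y ∈ U,
      shearXi a β₁ α₃ x y * deriv (fun x' => shearB f₀ f₁ x' y p) x
        + shearEta β₁ α₃ x y * deriv (fun y' => shearB f₀ f₁ x y' p) y
        + (deriv (fun x' => shearEta β₁ α₃ x' y) x
            + p * (deriv (fun y' => shearEta β₁ α₃ x y') y
                    - deriv (fun x' => shearXi a β₁ α₃ x' y) x)
            - p ^ 2 * deriv (fun y' => shearXi a β₁ α₃ x y') y)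
          * deriv (fun p' => shearB f₀ f₁ x y p') p
        + (2 * deriv (fun x' => shearXi a β₁ α₃ x' y) x
            + 3 * p * deriv (fun y' => shearXi a β₁ α₃ x y') y
            - deriv (fun y' => shearEta β₁ α₃ x y') y) * shearB f₀ f₁ x y p
        - deriv (fun x' => deriv (fun x'' => shearEta β₁ α₃ x'' y) x') x
        + p * (deriv (fun x' => deriv (fun x'' => shearXi a β₁ α₃ x'' y) x') x
                - 2 * deriv (fun y' => deriv (fun x' => shearEta β₁ α₃ x' y') x) y)
        + p ^ 2 * (2 * deriv (fun y' => deriv (fun x' => shearXi a β₁ α₃ x' y') x) y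
                - deriv (fun y' => deriv (fun y'' => shearEta β₁ α₃ x y'') y') y)
        + p ^ 3 * deriv (fun y' => deriv (fun y'' => shearXi a β₁ α₃ x y'') y') y = 0)
    ↔ (∀ y ∈ U,
        (a + 3 * β₁) * f₁ y + 3 * α₃ * y * f₁ y + (β₁ * y + α₃ * y ^ 2) * deriv f₁ y = 0
        ∧ (2 * a + 4 * β₁) * f₀ y + 3 * α₃ * y * f₀ y
            + (β₁ * y + α₃ * y ^ 2) * deriv f₀ y = 0) := by
  constructor
  · intro h y hy
    set E₀ := (2 * a + 4 * β₁) * f₀ y + 3 * α₃ * y * f₀ y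
        + (β₁ * y + α₃ * y ^ 2) * deriv f₀ y with hE₀
    set E₁ := (a + 3 * β₁) * f₁ y + 3 * α₃ * y * f₁ y
        + (β₁ * y + α₃ * y ^ 2) * deriv f₁ y with hE₁
    have key : ∀ x p : ℂ, (y - x * p) ^ 2 * ((y - x * p) * E₀ + p * E₁) = 0 := by
      intro x p
      rw [← shear_key U hU f₀ f₁ hf₀ hf₁ a β₁ α₃ x p y hy]
      exact h x p y hy
    have k1 := key (y - 1) 1
    have k2 := key (y - 2) 1
    have h1 : E₀ + E₁ = 0 := by
      have : y - (y - 1) * 1 = 1 := by ring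
      rw [this] at k1; linear_combination k1
    have h2 : 2 * E₀ + E₁ = 0 := by
      have : y - (y - 2) * 1 = 2 := by ring
      rw [this] at k2; linear_combination k2 / 4
    constructor
    · linear_combination 2 * h1 - h2
    · linear_combination h2 - h1
  · intro h x p y hy
    obtain ⟨h1, h0⟩ := h y hy
    rw [shear_key U hU f₀ f₁ hf₀ hf₁ a β₁ α₃ x p y hy]
    linear_combination (y - x * p) ^ 2 * ((y - x * p) * h0 + p * h1)
end

section
/- Let β₁ ∈ ℂ with β₁ ≠ 0, α₃ ∈ ℂ, and set c = −α₃/β₁. Let k, ℓ be non-negative integers and C₁, C₂ ∈ ℂ. Then on the open set {y ∈ ℂ : 1 − c y ≠ 0}: (i) the function f₁(y) = C₂ y^ℓ (1 − c y)^{−ℓ−3} satisfies (a + 3β₁)f₁(y) + 3α₃ y f₁(y) + (β₁ y + α₃ y²) f₁'(y) = 0 with a = −(ℓ+3)β₁; (ii) the function f₀(y) = C₁ y^k (1 − c y)^{−k−3} satisfies (2a' + 4β₁)f₀(y) + 3α₃ y f₀(y) + (β₁ y + α₃ y²) f₀'(y) = 0 with a' = −(k+4)β₁/2. -/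
lemma key_deriv (c C : ℂ) (n : ℕ) (y : ℂ) (hy : 1 - c * y ≠ 0) :
    HasDerivAt (fun y : ℂ => C * y ^ n * (1 - c * y) ^ (-(n : ℤ) - 3))
      ((C * (n * y ^ (n - 1))) * (1 - c * y) ^ (-(n : ℤ) - 3)
        + (C * y ^ n) * (((-(n : ℤ) - 3) * (1 - c * y) ^ (-(n : ℤ) - 3 - 1)) * (-c))) y := by
  have h1 : HasDerivAt (fun y : ℂ => C * y ^ n) (C * (n * y ^ (n - 1))) y :=
    (hasDerivAt_pow n y).const_mul C
  have hin : HasDerivAt (fun y : ℂ => 1 - c * y) (-c) y := by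
    simpa using ((hasDerivAt_id y).const_mul c).const_sub 1
  have h2 : HasDerivAt (fun y : ℂ => (1 - c * y) ^ (-(n : ℤ) - 3))
      (((-(n : ℤ) - 3) * (1 - c * y) ^ (-(n : ℤ) - 3 - 1)) * (-c)) y := by
    have := (hasDerivAt_zpow (-(n : ℤ) - 3) (1 - c * y) (Or.inl hy)).comp y hin
    simpa [Function.comp_def] using this
  exact h1.mul h2

lemma key (β₁ α₃ : ℂ) (hβ₁ : β₁ ≠ 0) (c : ℂ) (hc : c = -α₃ / β₁)
    (n : ℕ) (C y : ℂ) (hy : 1 - c * y ≠ 0) :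
    (-(n : ℂ) * β₁) * (C * y ^ n * (1 - c * y) ^ (-(n : ℤ) - 3))
      + 3 * α₃ * y * (C * y ^ n * (1 - c * y) ^ (-(n : ℤ) - 3))
      + (β₁ * y + α₃ * y ^ 2)
        * deriv (fun y => C * y ^ n * (1 - c * y) ^ (-(n : ℤ) - 3)) y = 0 := by
  have hα : α₃ = -(c * β₁) := by rw [hc]; field_simp
  rw [(key_deriv c C n y hy).deriv]
  have hu : (1 - c * y) ^ (-(n : ℤ) - 3) = (1 - c * y) ^ (-(n : ℤ) - 3 - 1) * (1 - c * y) := by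
    rw [← zpow_add_one₀ hy]; ring_nf
  rw [hu, hα]
  cases n with
  | zero => push_cast; ring
  | succ m =>
      have hy1 : y ^ (m + 1) = y ^ m * y := pow_succ y m
      simp only [Nat.add_sub_cancel, hy1]
      push_cast; ring

/-- The functions `f₁(y) = C₂ y^ℓ (1 − c y)^{−ℓ−3}` and `f₀(y) = C₁ y^k (1 − c y)^{−k−3}`
(with `c = −α₃/β₁`) solve the functional equations characterizing isotropic
infinitesimal symmetries, with `a = −(ℓ+3)β₁` and `a' = −(k+4)β₁/2` respectively. -/
theorem solutions_of_symmetry_equations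
    (β₁ α₃ : ℂ) (hβ₁ : β₁ ≠ 0) (c : ℂ) (hc : c = -α₃ / β₁)
    (k ℓ : ℕ) (C₁ C₂ : ℂ) :
    (∀ y : ℂ, 1 - c * y ≠ 0 →
      (fun f₁ : ℂ → ℂ => (fun a : ℂ =>
        (a + 3 * β₁) * f₁ y + 3 * α₃ * y * f₁ y
          + (β₁ * y + α₃ * y ^ 2) * deriv f₁ y = 0) (-(ℓ + 3) * β₁))
      (fun y => C₂ * y ^ ℓ * (1 - c * y) ^ (-(ℓ : ℤ) - 3)))
    ∧ (∀ y : ℂ, 1 - c * y ≠ 0 →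
      (fun f₀ : ℂ → ℂ => (fun a' : ℂ =>
        (2 * a' + 4 * β₁) * f₀ y + 3 * α₃ * y * f₀ y
          + (β₁ * y + α₃ * y ^ 2) * deriv f₀ y = 0) (-(k + 4) * β₁ / 2))
      (fun y => C₁ * y ^ k * (1 - c * y) ^ (-(k : ℤ) - 3))) := by
  constructor
  · intro y hy
    have h := key β₁ α₃ hβ₁ c hc ℓ C₂ y hy
    simp only []
    have : (-(↑ℓ + 3) * β₁ + 3 * β₁) = -(ℓ : ℂ) * β₁ := by ring
    rw [this]
    exact h
  · intro y hy
    have h := key β₁ α₃ hβ₁ c hc k C₁ y hy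
    simp only []
    have : (2 * (-(↑k + 4) * β₁ / 2) + 4 * β₁) = -(k : ℂ) * β₁ := by ring
    rw [this]
    exact h
end

section
/- Let a, β₁, α₃ ∈ ℂ, let k, ℓ be non-negative integers, and let (bₙ)ₙ≥₋₁ and (cₙ)ₙ≥₋₁ be sequences of complex numbers with b₋₁ = c₋₁ = 0, bₙ = 0 for 0 ≤ n < k, cₙ = 0 for 0 ≤ n < ℓ, b_k ≠ 0 and c_ℓ ≠ 0, satisfying for all n ≥ 0 the recursions (a + (n+3)β₁)cₙ + (n+2)α₃ c_{n−1} = 0 and (2a + (n+4)β₁)bₙ + (n+2)α₃ b_{n−1} = 0. If k ≠ 2ℓ + 2, then a = β₁ = α₃ = 0. -/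
/-! At the lowest nonvanishing coefficient each recursion loses its second term, so the
leading factors vanish: `a + (ℓ+3)β₁ = 0` and `2a + (k+4)β₁ = 0`. This linear system has
determinant `k - 2ℓ - 2`, hence `a = β₁ = 0` when `k ≠ 2ℓ + 2`. The `c`-recursion at
`n = ℓ + 1` then reads `(ℓ+3)α₃ c_ℓ = 0`, so `α₃ = 0`. -/

lemma factor_eq_zero_of_lowest_nonzero {R : Type*} [NonUnitalNonAssocSemiring R]
    [NoZeroDivisors R] {u : ℕ → R} {m : ℕ} (p q : R)
    (hlt : ∀ n < m, u n = 0) (hm : u m ≠ 0)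
    (hrec : p * u m + q * (if m = 0 then 0 else u (m - 1)) = 0) : p = 0 := by
  have hprev : (if m = 0 then 0 else u (m - 1)) = 0 := by
    split_ifs with h0
    · rfl
    · exact hlt _ (Nat.sub_one_lt h0)
  rw [hprev, mul_zero, add_zero] at hrec
  exact (mul_eq_zero.mp hrec).resolve_right hm

lemma eq_zero_of_leading_factors_eq_zero {K : Type*} [Field K] [CharZero K]
    {a β : K} {k ℓ : ℕ} (hk : k ≠ 2 * ℓ + 2)
    (hc : a + ((ℓ : K) + 3) * β = 0) (hb : 2 * a + ((k : K) + 4) * β = 0) :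
    a = 0 ∧ β = 0 := by
  have hdet : (k : K) - 2 * ℓ - 2 ≠ 0 := by
    rw [sub_sub, sub_ne_zero]
    exact_mod_cast hk
  have hdetβ : ((k : K) - 2 * ℓ - 2) * β = 0 := by linear_combination hb - 2 * hc
  have hβ : β = 0 := (mul_eq_zero.mp hdetβ).resolve_left hdet
  exact ⟨by simpa [hβ] using hc, hβ⟩

/-- If the Taylor coefficients `bₙ`, `cₙ` of `f₀`, `f₁` (with lowest nonvanishing
coefficients `b_k ≠ 0`, `c_ℓ ≠ 0`) satisfy the recursions
`(a + (n+3)β₁)cₙ + (n+2)α₃ c_{n−1} = 0` and `(2a + (n+4)β₁)bₙ + (n+2)α₃ b_{n−1} = 0`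
for all `n ≥ 0` (with `b₋₁ = c₋₁ = 0`), and `k ≠ 2ℓ + 2`, then `a = β₁ = α₃ = 0`. -/
theorem only_shear_symmetry_unless_k_eq_two_ell_add_two
    (a β₁ α₃ : ℂ) (k ℓ : ℕ) (b c : ℕ → ℂ)
    (hbk0 : ∀ n < k, b n = 0) (hcl0 : ∀ n < ℓ, c n = 0)
    (hbk : b k ≠ 0) (hcl : c ℓ ≠ 0)
    (hrec_c : ∀ n : ℕ, (a + ((n : ℂ) + 3) * β₁) * c n
      + ((n : ℂ) + 2) * α₃ * (if n = 0 then 0 else c (n - 1)) = 0)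
    (hrec_b : ∀ n : ℕ, (2 * a + ((n : ℂ) + 4) * β₁) * b n
      + ((n : ℂ) + 2) * α₃ * (if n = 0 then 0 else b (n - 1)) = 0)
    (hk : k ≠ 2 * ℓ + 2) :
    a = 0 ∧ β₁ = 0 ∧ α₃ = 0 := by
  obtain ⟨rfl, rfl⟩ := eq_zero_of_leading_factors_eq_zero hk
    (factor_eq_zero_of_lowest_nonzero _ _ hcl0 hcl (hrec_c ℓ))
    (factor_eq_zero_of_lowest_nonzero _ _ hbk0 hbk (hrec_b k))
  have hnext := hrec_c (ℓ + 1)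
  simp only [mul_zero, add_zero, zero_mul, zero_add, Nat.add_one_ne_zero, if_false,
    Nat.add_sub_cancel, mul_eq_zero, hcl, or_false] at hnext
  exact ⟨rfl, rfl, hnext.resolve_left (by norm_cast)⟩
end

section
/- Let k be a non-negative integer, U ⊆ ℂ open, and u : U → ℂ holomorphic with u''(s) = u(s)^k · (u(s) − s·u'(s))³ for all s ∈ U. Then for every λ ∈ ℂ with λ ≠ 0, the function v(x) = λ⁻² · u(λ^{−(k+2)} x) satisfies v''(x) = v(x)^k · (v(x) − x·v'(x))³ for all x in the open set λ^{k+2}·U. In other words, the one-parameter group of linear maps (x,y) ↦ (λ^{k+2} x, λ⁻² y), generated by the infinitesimal symmetry (k+2)x∂/∂x − 2y∂/∂y, maps solutions of y'' = y^k (y − x y')³ to solutions. -/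
lemma deriv_scale_aux (f : ℂ → ℂ) (a c x : ℂ) (hf : DifferentiableAt ℂ f (c * x)) :
    deriv (fun y => a * f (c * y)) x = a * c * deriv f (c * x) := by
  have h1 : HasDerivAt (fun y : ℂ => c * y) c x := by
    simpa using (hasDerivAt_id x).const_mul c
  have h2 := (hf.hasDerivAt.comp x h1).const_mul a
  have h3 := h2.deriv
  simp only [Function.comp] at h3
  rw [h3]; ring

/-- The one-parameter group `(x,y) ↦ (λ^{k+2} x, λ⁻² y)`, generated by the
infinitesimal symmetry `(k+2)x∂/∂x − 2y∂/∂y`, maps solutions of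
`y'' = y^k (y − x y')³` to solutions. -/
theorem scaling_symmetry_first_series
    (k : ℕ) (U : Set ℂ) (hU : IsOpen U)
    (u : ℂ → ℂ) (hu : DifferentiableOn ℂ u U)
    (hode : ∀ s ∈ U, deriv (deriv u) s = (u s) ^ k * (u s - s * deriv u s) ^ 3)
    (μ : ℂ) (hμ : μ ≠ 0) :
    ∀ x ∈ (fun s => μ ^ (k + 2) * s) '' U,
      (fun v : ℂ → ℂ =>
        deriv (deriv v) x = (v x) ^ k * (v x - x * deriv v x) ^ 3)
      (fun x => (μ ^ 2)⁻¹ * u ((μ ^ (k + 2))⁻¹ * x)) := by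
  set c : ℂ := μ ^ (k + 2) with hcdef
  have hc : c ≠ 0 := pow_ne_zero _ hμ
  set V : Set ℂ := (fun x => c⁻¹ * x) ⁻¹' U with hVdef
  have hVopen : IsOpen V := hU.preimage (by continuity)
  -- analyticity
  have han : AnalyticOnNhd ℂ u U := hu.analyticOnNhd hU
  have hdu : ∀ s ∈ U, DifferentiableAt ℂ (deriv u) s := fun s hs =>
    (han.deriv s hs).differentiableAt
  have huD : ∀ s ∈ U, DifferentiableAt ℂ u s := fun s hs =>
    (han s hs).differentiableAt
  -- first derivative formula on V
  have hd1 : ∀ x ∈ V, deriv (fun y => (μ ^ 2)⁻¹ * u (c⁻¹ * y)) x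
      = (μ ^ 2)⁻¹ * c⁻¹ * deriv u (c⁻¹ * x) := fun x hx =>
    deriv_scale_aux u ((μ ^ 2)⁻¹) c⁻¹ x (huD _ hx)
  rintro x ⟨s, hs, rfl⟩
  simp only
  have hxV : c * s ∈ V := by
    simp [hVdef, inv_mul_cancel_left₀ hc, hs]
  have hsx : c⁻¹ * (c * s) = s := inv_mul_cancel_left₀ hc s
  -- second derivative
  have heq : deriv (fun y => (μ ^ 2)⁻¹ * u (c⁻¹ * y))
      =ᶠ[nhds (c * s)] (fun y => (μ ^ 2)⁻¹ * c⁻¹ * deriv u (c⁻¹ * y)) := by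
    filter_upwards [hVopen.mem_nhds hxV] with y hy using hd1 y hy
  have hd2 : deriv (deriv (fun y => (μ ^ 2)⁻¹ * u (c⁻¹ * y))) (c * s)
      = (μ ^ 2)⁻¹ * c⁻¹ * c⁻¹ * deriv (deriv u) s := by
    rw [heq.deriv_eq, deriv_scale_aux (deriv u) ((μ ^ 2)⁻¹ * c⁻¹) c⁻¹ (c * s)
      (by rw [hsx]; exact hdu s hs), hsx]
  rw [hd2, hd1 _ hxV, hsx, hode s hs]
  have hμ2 : (μ:ℂ) ^ 2 ≠ 0 := pow_ne_zero _ hμ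
  have hck : c = μ ^ k * μ ^ 2 := by rw [hcdef, pow_add]
  field_simp
  ring_nf
  rw [hck]
  field_simp
  have h1 : μ ^ (k * 2) * μ⁻¹ ^ (k * 2) = 1 := by
    rw [← mul_pow, mul_inv_cancel₀ hμ, one_pow]
  linear_combination (-(u s * u s ^ k * s ^ 2 * deriv u s ^ 2 * 3 - u s ^ 2 * u s ^ k * s * deriv u s * 3 + u s ^ 3 * u s ^ k - u s ^ k * s ^ 3 * deriv u s ^ 3)) * h1
end

section
/- Let ℓ be a non-negative integer, C ∈ ℂ, U ⊆ ℂ open, and u : U → ℂ holomorphic with u''(s) = u(s)^ℓ · u'(s) · (u(s) − s·u'(s))² + C · u(s)^{2ℓ+2} · (u(s) − s·u'(s))³ for all s ∈ U. Then for every λ ∈ ℂ with λ ≠ 0, the function v(x) = λ⁻¹ · u(λ^{−(ℓ+2)} x) satisfies v''(x) = v(x)^ℓ · v'(x) · (v(x) − x·v'(x))² + C · v(x)^{2ℓ+2} · (v(x) − x·v'(x))³ for all x in the open set λ^{ℓ+2}·U. In other words, the one-parameter group of linear maps (x,y) ↦ (λ^{ℓ+2} x, λ⁻¹ y), generated by the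 infinitesimal symmetry (ℓ+2)x∂/∂x − y∂/∂y, maps solutions of this ODE to solutions. -/
/-- The one-parameter group `(x,y) ↦ (λ^{ℓ+2} x, λ⁻¹ y)`, generated by the
infinitesimal symmetry `(ℓ+2)x∂/∂x − y∂/∂y`, maps solutions of
`y'' = y^ℓ y' (y − x y')² + C y^{2ℓ+2} (y − x y')³` to solutions. -/
theorem scaling_symmetry_second_series
    (ℓ : ℕ) (C : ℂ) (U : Set ℂ) (hU : IsOpen U)
    (u : ℂ → ℂ) (hu : DifferentiableOn ℂ u U)
    (hode : ∀ s ∈ U, deriv (deriv u) s =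
      (u s) ^ ℓ * deriv u s * (u s - s * deriv u s) ^ 2
        + C * (u s) ^ (2 * ℓ + 2) * (u s - s * deriv u s) ^ 3)
    (μ : ℂ) (hμ : μ ≠ 0) :
    ∀ x ∈ (fun s => μ ^ (ℓ + 2) * s) '' U,
      (fun v : ℂ → ℂ =>
        deriv (deriv v) x =
          (v x) ^ ℓ * deriv v x * (v x - x * deriv v x) ^ 2
            + C * (v x) ^ (2 * ℓ + 2) * (v x - x * deriv v x) ^ 3)
      (fun x => μ⁻¹ * u ((μ ^ (ℓ + 2))⁻¹ * x)) := by
  have ha : (μ : ℂ) ^ (ℓ + 2) ≠ 0 := pow_ne_zero _ hμ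
  set a : ℂ := μ ^ (ℓ + 2) with ha_def
  -- open preimage set
  set W : Set ℂ := (fun t => a⁻¹ * t) ⁻¹' U with hW_def
  have hWopen : IsOpen W := hU.preimage (by continuity)
  have hanalytic : AnalyticOnNhd ℂ u U := hu.analyticOnNhd hU
  have hdu : DifferentiableOn ℂ (deriv u) U := fun z hz =>
    ((hanalytic.deriv) z hz).differentiableAt.differentiableWithinAt
  -- first derivative formula on W
  have hderiv1 : ∀ x ∈ W, deriv (fun y => μ⁻¹ * u (a⁻¹ * y)) x
      = μ⁻¹ * (a⁻¹ * deriv u (a⁻¹ * x)) := by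
    intro x hx
    have hx' : a⁻¹ * x ∈ U := hx
    have hdu1 : DifferentiableAt ℂ u (a⁻¹ * x) :=
      hu.differentiableAt (hU.mem_nhds hx')
    have h1 : HasDerivAt (fun y : ℂ => a⁻¹ * y) a⁻¹ x := by
      simpa using (hasDerivAt_id x).const_mul a⁻¹
    have h2 : HasDerivAt (fun y => u (a⁻¹ * y)) (deriv u (a⁻¹ * x) * a⁻¹) x :=
      hdu1.hasDerivAt.comp x h1
    have h3 := (h2.const_mul μ⁻¹).deriv
    rw [h3]; ring
  rintro x ⟨s, hs, rfl⟩
  simp only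
  have hxW : a * s ∈ W := by
    show a⁻¹ * (a * s) ∈ U
    rw [inv_mul_cancel_left₀ ha]; exact hs
  have hkey : a⁻¹ * (a * s) = s := inv_mul_cancel_left₀ ha s
  -- second derivative
  have hEq : deriv (fun y => μ⁻¹ * u (a⁻¹ * y))
      =ᶠ[nhds (a * s)] fun y => μ⁻¹ * (a⁻¹ * deriv u (a⁻¹ * y)) := by
    filter_upwards [hWopen.mem_nhds hxW] with y hy using hderiv1 y hy
  have hdu2 : DifferentiableAt ℂ (deriv u) s :=
    ((hanalytic.deriv) s hs).differentiableAt
  have h1 : HasDerivAt (fun y : ℂ => a⁻¹ * y) a⁻¹ (a * s) := by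
    simpa using (hasDerivAt_id (a * s)).const_mul a⁻¹
  have hd : HasDerivAt (deriv u) (deriv (deriv u) s) (a⁻¹ * (a * s)) := by
    rw [hkey]; exact hdu2.hasDerivAt
  have h2 : HasDerivAt (fun y => deriv u (a⁻¹ * y))
      (deriv (deriv u) s * a⁻¹) (a * s) := hd.comp (a * s) h1
  have h3 : deriv (deriv (fun y => μ⁻¹ * u (a⁻¹ * y))) (a * s)
      = μ⁻¹ * (a⁻¹ * (deriv (deriv u) s * a⁻¹)) := by
    rw [hEq.deriv_eq]
    have h4 := (h2.const_mul (μ⁻¹ * a⁻¹)).deriv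
    simp only [mul_assoc] at h4 ⊢
    rw [h4]
  rw [h3, hderiv1 (a * s) hxW, hkey, hode s hs]
  have h5 : a * s * (μ⁻¹ * (a⁻¹ * deriv u s)) = μ⁻¹ * (s * deriv u s) := by
    field_simp
  rw [h5]
  have h6 : a⁻¹ = μ⁻¹ ^ (ℓ + 2) := by rw [ha_def, inv_pow]
  rw [h6]
  ring
end

section
/- On ℂ⁴ with coordinates (α,β,γ,δ), let k be a non-negative integer and consider the vector fields 𝔷₁ = β∂/∂α + δ∂/∂γ (components (β,0,δ,0)), 𝔷_Q = α∂/∂β + γ∂/∂δ (components (0,α,0,γ)), 𝔏 = 2α∂/∂α + (k+2)β∂/∂β − (k+2)γ∂/∂γ − 2δ∂/∂δ, and 𝔷₂ = 𝔷_Q + δ^k·𝔷₁. Then the Lie brackets satisfy [𝔏, 𝔷₁] = k·𝔷₁ and [𝔏, 𝔷₂] = −k·𝔷₂, where for vector fields X, Y on ℂ⁴ the Lie bracket is [X,Y](p) = DY(p)·X(p) − DX(p)·Y(p). -/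
/-!
`𝔏`, `𝔷₁` and `𝔷_Q` are linear vector fields, so their brackets are matrix commutators, and
since `𝔏` is diagonal, `𝔷₁` and `𝔷_Q` are eigenvectors of `ad 𝔏` with eigenvalues `k` and `-k`.
The monomial `δ^k` is an eigenfunction of `𝔏` with eigenvalue `-2k`, so by the Leibniz rule
`δ^k 𝔷₁` has eigenvalue `-2k + k = -k`, the same as `𝔷_Q`, and hence so does `𝔷₂`.
-/

noncomputable def lieBracketC4 (X Y : (Fin 4 → ℂ) → (Fin 4 → ℂ)) (p : Fin 4 → ℂ) :
    Fin 4 → ℂ :=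
  fderiv ℂ Y p (X p) - fderiv ℂ X p (Y p)

open VectorField ContinuousLinearMap

section WeightVectors

variable {𝕜 E : Type*} [NontriviallyNormedField 𝕜] [NormedAddCommGroup E] [NormedSpace 𝕜 E]

theorem lieBracket_continuousLinearMap (A B : E →L[𝕜] E) (x : E) :
    lieBracket 𝕜 A B x = B (A x) - A (B x) := by
  simp only [lieBracket_eq, ContinuousLinearMap.fderiv]

theorem fderiv_pow_apply_of_apply_eq_mul (ℓ : E →L[𝕜] 𝕜) (n : ℕ) {v x : E} {w : 𝕜}
    (h : ℓ v = w * ℓ x) :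
    fderiv 𝕜 (fun y => ℓ y ^ n) x v = n * w * ℓ x ^ n := by
  rw [fderiv_fun_pow n ℓ.differentiableAt, ℓ.fderiv]
  rcases n with _ | n
  · simp
  · simp only [smul_apply, h, nsmul_eq_mul, smul_eq_mul, Nat.add_sub_cancel]
    ring

theorem lieBracket_add_smul_of_weights {L Y Z : E → E} {f : E → 𝕜} {a b : 𝕜} {x : E}
    (hY : DifferentiableAt 𝕜 Y x) (hZ : DifferentiableAt 𝕜 Z x) (hf : DifferentiableAt 𝕜 f x)
    (hLY : lieBracket 𝕜 L Y x = a • Y x) (hLZ : lieBracket 𝕜 L Z x = b • Z x)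
    (hLf : fderiv 𝕜 f x (L x) = (a - b) * f x) :
    lieBracket 𝕜 L (fun y => Y y + f y • Z y) x = a • (Y x + f x • Z x) := by
  rw [← Pi.add_def, lieBracket_add_right (W₁ := fun y => f y • Z y) hY (hf.smul hZ),
    lieBracket_smul_right hf hZ, hLY, hLZ, hLf]
  module

end WeightVectors

namespace FirstSeries

noncomputable def Z₁ : (Fin 4 → ℂ) →L[ℂ] Fin 4 → ℂ := pi ![proj 1, 0, proj 3, 0]

noncomputable def ZQ : (Fin 4 → ℂ) →L[ℂ] Fin 4 → ℂ := pi ![0, proj 0, 0, proj 2]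

noncomputable def L (k : ℕ) : (Fin 4 → ℂ) →L[ℂ] Fin 4 → ℂ :=
  pi ![(2 : ℂ) • proj 0, ((k : ℂ) + 2) • proj 1, -((k : ℂ) + 2) • proj 2, (-2 : ℂ) • proj 3]

theorem coe_Z₁ : ⇑Z₁ = fun p => ![p 1, 0, p 3, 0] := by
  ext p i
  fin_cases i <;> rfl

theorem coe_ZQ : ⇑ZQ = fun p => ![0, p 0, 0, p 2] := by
  ext p i
  fin_cases i <;> rfl

theorem coe_L (k : ℕ) :
    ⇑(L k) = fun p => ![2 * p 0, ((k : ℂ) + 2) * p 1, -((k : ℂ) + 2) * p 2, -2 * p 3] := by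
  ext p i
  fin_cases i <;> rfl

theorem lieBracket_L_Z₁ (k : ℕ) (p : Fin 4 → ℂ) :
    lieBracket ℂ (L k) Z₁ p = (k : ℂ) • Z₁ p := by
  rw [lieBracket_continuousLinearMap, coe_L, coe_Z₁]
  ext i
  fin_cases i <;>
    simp only [Fin.isValue, Fin.zero_eta, Fin.mk_one, Fin.reduceFinMk, Matrix.cons_val_zero,
      Matrix.cons_val_one, Matrix.cons_val, Pi.sub_apply, Pi.smul_apply, smul_eq_mul] <;> ring

theorem lieBracket_L_ZQ (k : ℕ) (p : Fin 4 → ℂ) :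
    lieBracket ℂ (L k) ZQ p = -(k : ℂ) • ZQ p := by
  rw [lieBracket_continuousLinearMap, coe_L, coe_ZQ]
  ext i
  fin_cases i <;>
    simp only [Fin.isValue, Fin.zero_eta, Fin.mk_one, Fin.reduceFinMk, Matrix.cons_val_zero,
      Matrix.cons_val_one, Matrix.cons_val, Pi.sub_apply, Pi.smul_apply, smul_eq_mul] <;> ring

theorem fderiv_pow_three_L (k : ℕ) (p : Fin 4 → ℂ) :
    fderiv ℂ (fun q : Fin 4 → ℂ => q 3 ^ k) p (L k p) = (-(k : ℂ) - k) * p 3 ^ k := by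
  have h3 : proj (R := ℂ) (φ := fun _ : Fin 4 => ℂ) 3 (L k p) = -2 * p 3 := by simp [L]
  calc _ = (k : ℂ) * -2 * p 3 ^ k := fderiv_pow_apply_of_apply_eq_mul _ k h3
    _ = _ := by ring

end FirstSeries

/-- On `ℂ⁴` with coordinates `(α,β,γ,δ)`, for `𝔷₁ = β∂/∂α + δ∂/∂γ`,
`𝔷_Q = α∂/∂β + γ∂/∂δ`, `𝔏 = 2α∂/∂α + (k+2)β∂/∂β − (k+2)γ∂/∂γ − 2δ∂/∂δ` and
`𝔷₂ = 𝔷_Q + δ^k·𝔷₁`, one has `[𝔏, 𝔷₁] = k·𝔷₁` and `[𝔏, 𝔷₂] = −k·𝔷₂`. -/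
theorem bracket_relations_first_series (k : ℕ) :
    (fun (Z₁ ZQ L : (Fin 4 → ℂ) → (Fin 4 → ℂ)) =>
      (fun Z₂ : (Fin 4 → ℂ) → (Fin 4 → ℂ) =>
        (∀ p : Fin 4 → ℂ, lieBracketC4 L Z₁ p = (k : ℂ) • Z₁ p)
        ∧ (∀ p : Fin 4 → ℂ, lieBracketC4 L Z₂ p = (-(k : ℂ)) • Z₂ p))
      (fun p => ZQ p + (p 3) ^ k • Z₁ p))
    (fun p => ![p 1, 0, p 3, 0])
    (fun p => ![0, p 0, 0, p 2])
    (fun p => ![2 * p 0, ((k : ℂ) + 2) * p 1, -((k : ℂ) + 2) * p 2, -2 * p 3]) := by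
  open FirstSeries in
  rw [← coe_Z₁, ← coe_ZQ, ← coe_L]
  refine ⟨lieBracket_L_Z₁ k, fun p => ?_⟩
  exact lieBracket_add_smul_of_weights ZQ.differentiableAt Z₁.differentiableAt
    (by fun_prop) (lieBracket_L_ZQ k p) (lieBracket_L_Z₁ k p) (fderiv_pow_three_L k p)
end

section
/- On ℂ⁴ with coordinates (α,β,γ,δ), let ℓ be a non-negative integer, C ∈ ℂ, and consider the vector fields 𝔷₁ = β∂/∂α + δ∂/∂γ (components (β,0,δ,0)), 𝔷_Q = α∂/∂β + γ∂/∂δ (components (0,α,0,γ)), 𝔏 = α∂/∂α + (ℓ+2)β∂/∂β − (ℓ+2)γ∂/∂γ − δ∂/∂δ, and 𝔷₂ = 𝔷_Q + (γδ^ℓ + Cδ^{2ℓ+2})·𝔷₁. Then the Lie brackets satisfy [𝔏, 𝔷₁] = (ℓ+1)·𝔷₁ and [𝔏, 𝔷₂] = −(ℓ+1)·𝔷₂, where for vector fields X, Y on ℂ⁴ the Lie bracket is [X,Y](p) = DY(p)·X(p) − DX(p)·Y(p). -/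
open ContinuousLinearMap

/-- Coordinate projection as a continuous linear map. -/
noncomputable def prC (i : Fin 4) : (Fin 4 → ℂ) →L[ℂ] ℂ := proj i

/-- The linear field `𝔷₁` as a continuous linear map. -/
noncomputable def D1 : (Fin 4 → ℂ) →L[ℂ] (Fin 4 → ℂ) := pi ![prC 1, 0, prC 3, 0]

/-- The linear field `𝔷_Q` as a continuous linear map. -/
noncomputable def DQ : (Fin 4 → ℂ) →L[ℂ] (Fin 4 → ℂ) := pi ![0, prC 0, 0, prC 2]

/-- The linear field `𝔏` as a continuous linear map. -/
noncomputable def DL (ℓ : ℕ) : (Fin 4 → ℂ) →L[ℂ] (Fin 4 → ℂ) :=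
  pi ![prC 0, ((ℓ : ℂ) + 2) • prC 1, (-((ℓ : ℂ) + 2)) • prC 2, -prC 3]

lemma D1_eq : (fun p : Fin 4 → ℂ => ![p 1, 0, p 3, 0]) = ⇑D1 := by
  funext p
  funext i
  fin_cases i <;> simp [D1, prC]

lemma DQ_eq : (fun p : Fin 4 → ℂ => ![0, p 0, 0, p 2]) = ⇑DQ := by
  funext p
  funext i
  fin_cases i <;> simp [DQ, prC]

lemma DL_eq (ℓ : ℕ) :
    (fun p : Fin 4 → ℂ => ![p 0, ((ℓ : ℂ) + 2) * p 1, -((ℓ : ℂ) + 2) * p 2, -p 3]) = ⇑(DL ℓ) := by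
  funext p
  funext i
  fin_cases i <;> simp [DL, prC]

lemma pow_pred_mul (n : ℕ) (x : ℂ) : (n : ℂ) * x ^ (n - 1) * x = (n : ℂ) * x ^ n := by
  cases n with
  | zero => simp
  | succ m => simp [pow_succ]; ring

/-- On `ℂ⁴` with coordinates `(α,β,γ,δ)`, for `𝔷₁ = β∂/∂α + δ∂/∂γ`,
`𝔷_Q = α∂/∂β + γ∂/∂δ`, `𝔏 = α∂/∂α + (ℓ+2)β∂/∂β − (ℓ+2)γ∂/∂γ − δ∂/∂δ` and
`𝔷₂ = 𝔷_Q + (γδ^ℓ + Cδ^{2ℓ+2})·𝔷₁`, one has `[𝔏, 𝔷₁] = (ℓ+1)·𝔷₁` and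
`[𝔏, 𝔷₂] = −(ℓ+1)·𝔷₂`. -/
theorem bracket_relations_second_series (ℓ : ℕ) (C : ℂ) :
    (fun (Z₁ ZQ L : (Fin 4 → ℂ) → (Fin 4 → ℂ)) =>
      (fun Z₂ : (Fin 4 → ℂ) → (Fin 4 → ℂ) =>
        (∀ p : Fin 4 → ℂ, lieBracketC4 L Z₁ p = ((ℓ : ℂ) + 1) • Z₁ p)
        ∧ (∀ p : Fin 4 → ℂ, lieBracketC4 L Z₂ p = (-((ℓ : ℂ) + 1)) • Z₂ p))
      (fun p => ZQ p + (p 2 * (p 3) ^ ℓ + C * (p 3) ^ (2 * ℓ + 2)) • Z₁ p))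
    (fun p => ![p 1, 0, p 3, 0])
    (fun p => ![0, p 0, 0, p 2])
    (fun p => ![p 0, ((ℓ : ℂ) + 2) * p 1, -((ℓ : ℂ) + 2) * p 2, -p 3]) := by
  simp only
  constructor
  · intro p
    unfold lieBracketC4
    rw [D1_eq, DL_eq, D1.fderiv, (DL ℓ).fderiv]
    funext i
    fin_cases i <;>
      simp [D1, DL, prC] <;> ring
  · intro p
    unfold lieBracketC4
    rw [DL_eq, (DL ℓ).fderiv]
    have h3 : HasFDerivAt (fun p : Fin 4 → ℂ => p 3) (prC 3) p := (prC 3).hasFDerivAt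
    have h2 : HasFDerivAt (fun p : Fin 4 → ℂ => p 2) (prC 2) p := (prC 2).hasFDerivAt
    have hpow1 : HasFDerivAt (fun p : Fin 4 → ℂ => p 3 ^ ℓ)
        (((ℓ : ℂ) * p 3 ^ (ℓ - 1)) • prC 3) p :=
      (hasDerivAt_pow ℓ (p 3)).comp_hasFDerivAt p h3
    have hpow2 : HasFDerivAt (fun p : Fin 4 → ℂ => p 3 ^ (2 * ℓ + 2))
        ((((2 * ℓ + 2 : ℕ) : ℂ) * p 3 ^ (2 * ℓ + 2 - 1)) • prC 3) p :=
      by have := (hasDerivAt_pow (2 * ℓ + 2) (p 3)).comp_hasFDerivAt p h3; exact this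
    have hs : HasFDerivAt (fun p : Fin 4 → ℂ => p 2 * p 3 ^ ℓ + C * p 3 ^ (2 * ℓ + 2))
        ((p 2 • (((ℓ : ℂ) * p 3 ^ (ℓ - 1)) • prC 3) + p 3 ^ ℓ • prC 2) +
          C • ((((2 * ℓ + 2 : ℕ) : ℂ) * p 3 ^ (2 * ℓ + 2 - 1)) • prC 3)) p :=
      (h2.mul hpow1).add (hpow2.const_mul C)
    have h1 : HasFDerivAt (fun p : Fin 4 → ℂ => ![p 1, 0, p 3, 0]) D1 p := by
      rw [D1_eq]; exact D1.hasFDerivAt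
    have hQ : HasFDerivAt (fun p : Fin 4 → ℂ => ![(0 : ℂ), p 0, 0, p 2]) DQ p := by
      rw [DQ_eq]; exact DQ.hasFDerivAt
    have hZ2 : HasFDerivAt (fun p : Fin 4 → ℂ => ![(0 : ℂ), p 0, 0, p 2] +
        (p 2 * p 3 ^ ℓ + C * p 3 ^ (2 * ℓ + 2)) • ![p 1, 0, p 3, 0]) _ p := hQ.add (hs.smul h1)
    rw [hZ2.fderiv]
    funext i
    have key1 := pow_pred_mul ℓ (p 3)
    have key2 := pow_pred_mul (2 * ℓ + 2) (p 3)
    fin_cases i <;>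
      (simp only [ContinuousLinearMap.add_apply, ContinuousLinearMap.smul_apply,
          ContinuousLinearMap.smulRight_apply, Pi.add_apply, Pi.smul_apply, Pi.sub_apply,
          smul_eq_mul, D1, DQ, DL, prC, ContinuousLinearMap.pi_apply,
          ContinuousLinearMap.proj_apply, ContinuousLinearMap.zero_apply,
          ContinuousLinearMap.neg_apply]
       simp [Matrix.cons_val_zero, Matrix.cons_val_one, Matrix.head_cons])
    · linear_combination (-(p 1) * p 2) * key1
    · ring
    · linear_combination (-(p 3) * p 2) * key1
    · ring
end

section
/- Let c₁, c₂ ∈ ℂ with c₂ ≠ 0, let U ⊆ ℂ be open with c₂²x² + c₂ ≠ 0 for all x ∈ U, and let y : U → ℂ be holomorphic with (y(x) − c₁x)² = c₂²x² + c₂ for all x ∈ U. Then y''(x) = (y(x) − x·y'(x))³ for all x ∈ U. In other words, the complete solution of the ODE y'' = (y − x y')³ is the quartic family (y − c₁x)² − c₂²x² − c₂ = 0. -/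
/-- The complete solution of the quartic ODE `y'' = (y − x y')³` is the quartic
family `(y − c₁x)² − c₂²x² − c₂ = 0`: any holomorphic branch of this family
solves the ODE. -/
theorem quartic_family_solves_quartic_ode
    (c₁ c₂ : ℂ) (hc₂ : c₂ ≠ 0) (U : Set ℂ) (hU : IsOpen U)
    (hnz : ∀ x ∈ U, c₂ ^ 2 * x ^ 2 + c₂ ≠ 0)
    (y : ℂ → ℂ) (hy : DifferentiableOn ℂ y U)
    (hsol : ∀ x ∈ U, (y x - c₁ * x) ^ 2 = c₂ ^ 2 * x ^ 2 + c₂) :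
    ∀ x ∈ U, deriv (deriv y) x = (y x - x * deriv y x) ^ 3 := by
  have hdy : ∀ t ∈ U, DifferentiableAt ℂ y t := fun t ht =>
    (hy t ht).differentiableAt (hU.mem_nhds ht)
  have hwne : ∀ t ∈ U, y t - c₁ * t ≠ 0 := by
    intro t ht h0
    exact hnz t ht (by rw [← hsol t ht, h0]; ring)
  have hwd : ∀ t ∈ U, HasDerivAt (fun s => y s - c₁ * s) (deriv y t - c₁) t := by
    intro t ht
    have := ((hdy t ht).hasDerivAt).sub ((hasDerivAt_id t).const_mul c₁)
    exact this.congr_deriv (by simp)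
  have hderiv_eq : ∀ t ∈ U, deriv y t = c₁ + c₂ ^ 2 * t / (y t - c₁ * t) := by
    intro t ht
    have hL : HasDerivAt (fun s => (y s - c₁ * s) ^ 2)
        (2 * (y t - c₁ * t) * (deriv y t - c₁)) t := by
      have := (hwd t ht).pow 2
      exact this.congr_deriv (by rw [show (2:ℕ) - 1 = 1 from rfl]; push_cast; ring)
    have hR : HasDerivAt (fun s => c₂ ^ 2 * s ^ 2 + c₂) (c₂ ^ 2 * (2 * t)) t := by
      have := ((hasDerivAt_pow 2 t).const_mul (c₂ ^ 2)).add_const c₂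
      simpa [mul_comm, mul_assoc] using this
    have hL' : HasDerivAt (fun s => (y s - c₁ * s) ^ 2) (c₂ ^ 2 * (2 * t)) t :=
      hR.congr_of_eventuallyEq (by
        filter_upwards [hU.mem_nhds ht] with s hs using hsol s hs)
    have heq := hL.unique hL'
    have hw := hwne t ht
    field_simp
    linear_combination heq / 2
  intro x hx
  have hw := hwne x hx
  have hnum : HasDerivAt (fun s : ℂ => c₂ ^ 2 * s) (c₂ ^ 2) x := by
    simpa using (hasDerivAt_id x).const_mul (c₂ ^ 2)
  have hg : HasDerivAt (fun s => c₁ + c₂ ^ 2 * s / (y s - c₁ * s))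
      ((c₂ ^ 2 * (y x - c₁ * x) - c₂ ^ 2 * x * (deriv y x - c₁)) / (y x - c₁ * x) ^ 2) x := by
    exact ((hnum.div (hwd x hx) hw)).const_add c₁
  have hdd : deriv (deriv y) x
      = (c₂ ^ 2 * (y x - c₁ * x) - c₂ ^ 2 * x * (deriv y x - c₁)) / (y x - c₁ * x) ^ 2 := by
    have hev : deriv y =ᶠ[nhds x] fun s => c₁ + c₂ ^ 2 * s / (y s - c₁ * s) :=
      Filter.eventuallyEq_of_mem (hU.mem_nhds hx) fun s hs => hderiv_eq s hs
    rw [hev.deriv_eq, hg.deriv]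
  have hs := hsol x hx
  have h1 : y x - x * deriv y x = c₂ / (y x - c₁ * x) := by
    rw [hderiv_eq x hx]; linear_combination (y x - c₁ * x)⁻¹ * hs - (y x - c₁ * x) * mul_inv_cancel₀ hw
  have h2 : deriv y x - c₁ = c₂ ^ 2 * x / (y x - c₁ * x) := by
    rw [hderiv_eq x hx]; ring
  rw [hdd, h1, h2]
  set w := y x - c₁ * x with hwdef
  have hinv := mul_inv_cancel₀ hw; simp only [div_eq_mul_inv, ← inv_pow]

  linear_combination c₂ ^ 2 * w⁻¹ ^ 3 * hs - c₂ ^ 2 * w * w⁻¹ ^ 2 * hinv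
end

section
/- Let c₁, c₂ ∈ ℂ, let U ⊆ ℂ be open, and let y : U → ℂ be holomorphic with y(x) ≠ c₂ for all x ∈ U and (x − c₁)² − (y(x) − c₂)² = c₁² for all x ∈ U. Then for all x ∈ U: (x·y''(x) − (1 − y'(x)²)·y'(x))² + (1 − y'(x)²)³ = 0. -/
private lemma key_alg (w p q x c₁ : ℂ) (h1 : x - w * p = c₁) (h2 : 1 - p ^ 2 = w * q)
    (h3 : w ^ 3 * q = -c₁ ^ 2) :
    (x * q - (1 - p ^ 2) * p) ^ 2 + (1 - p ^ 2) ^ 3 = 0 := by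
  subst h1
  rw [h2]
  linear_combination q ^ 2 * h3

/-- Any holomorphic branch of the family `(x − c₁)² − (y − c₂)² = c₁²` satisfies the
rationalized (squared) form of the dual quartic ODE
`y'' = (1 − (y')²)/(x(y' + √((y')² − 1)))`, namely
`(x y'' − (1 − (y')²) y')² + (1 − (y')²)³ = 0`. -/
theorem dual_quartic_family_solves_dual_ode
    (c₁ c₂ : ℂ) (U : Set ℂ) (hU : IsOpen U)
    (y : ℂ → ℂ) (hy : DifferentiableOn ℂ y U)
    (hne : ∀ x ∈ U, y x ≠ c₂)
    (hsol : ∀ x ∈ U, (x - c₁) ^ 2 - (y x - c₂) ^ 2 = c₁ ^ 2) :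
    ∀ x ∈ U,
      (x * deriv (deriv y) x - (1 - (deriv y x) ^ 2) * deriv y x) ^ 2
        + (1 - (deriv y x) ^ 2) ^ 3 = 0 := by
  have hya : ∀ z ∈ U, AnalyticAt ℂ y z := fun z hz => hy.analyticAt (hU.mem_nhds hz)
  -- first derivative relation on U
  have h1 : ∀ z ∈ U, z - c₁ = (y z - c₂) * deriv y z := by
    intro z hz
    have hd : HasDerivAt (fun t => (t - c₁) ^ 2 - (y t - c₂) ^ 2)
        (2 * (z - c₁) - 2 * (y z - c₂) * deriv y z) z := by
      have ha : HasDerivAt (fun t => (t - c₁) ^ 2) (2 * (z - c₁)) z := by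
        simpa using (((hasDerivAt_id z).sub_const c₁).fun_pow 2)
      have hb : HasDerivAt (fun t => (y t - c₂) ^ 2) (2 * (y z - c₂) * deriv y z) z := by
        have := (((hya z hz).differentiableAt.hasDerivAt).sub_const c₂).fun_pow 2
        simpa [mul_comm, mul_assoc] using this
      simpa using ha.fun_sub hb
    have heq : (fun t => (t - c₁) ^ 2 - (y t - c₂) ^ 2) =ᶠ[nhds z] fun _ => c₁ ^ 2 := by
      filter_upwards [hU.mem_nhds hz] with t ht using hsol t ht
    have h0 : deriv (fun t => (t - c₁) ^ 2 - (y t - c₂) ^ 2) z = 0 := by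
      rw [heq.deriv_eq]; simp
    rw [hd.deriv] at h0
    linear_combination h0 / 2
  intro x hx
  -- second derivative relation at x
  have h2 : 1 - (deriv y x) ^ 2 = (y x - c₂) * deriv (deriv y) x := by
    have hd : HasDerivAt (fun t => (t - c₁) - (y t - c₂) * deriv y t)
        (1 - (deriv y x * deriv y x + (y x - c₂) * deriv (deriv y) x)) x := by
      have ha : HasDerivAt (fun t => t - c₁) 1 x := (hasDerivAt_id x).sub_const c₁
      have hb : HasDerivAt (fun t => (y t - c₂) * deriv y t)
          (deriv y x * deriv y x + (y x - c₂) * deriv (deriv y) x) x := by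
        exact (((hya x hx).differentiableAt.hasDerivAt).sub_const c₂).mul
          (((hy.analyticOnNhd hU).deriv x hx).differentiableAt.hasDerivAt)
      exact ha.sub hb
    have heq : (fun t => (t - c₁) - (y t - c₂) * deriv y t) =ᶠ[nhds x] fun _ => (0 : ℂ) := by
      filter_upwards [hU.mem_nhds hx] with t ht
      have := h1 t ht
      simp [← this]
    have h0 : deriv (fun t => (t - c₁) - (y t - c₂) * deriv y t) x = 0 := by
      rw [heq.deriv_eq]; simp
    rw [hd.deriv] at h0
    linear_combination h0
  have hw3 : (y x - c₂) ^ 3 * deriv (deriv y) x = -c₁ ^ 2 := by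
    have hA := hsol x hx
    have hB := h1 x hx
    linear_combination (-(y x - c₂) ^ 2) * h2 + (x - c₁ + (y x - c₂) * deriv y x) * hB - hA
  exact key_alg (y x - c₂) (deriv y x) (deriv (deriv y) x) x c₁
    (by linear_combination h1 x hx) h2 hw3
end

section
/- Let U ⊆ ℂ be open, φ : U → ℂ holomorphic, a ∈ ℂ, and define f₀(y) = −((y·φ'''(y) + 3φ''(y))·φ(y) + a·φ''(y))/6. Then for all y ∈ U the identity 6·[(4φ(y) − y·φ'(y) + 2a)·f₀(y) + y·φ(y)·f₀'(y)] = −[(y²·φ''''(y) + 8y·φ'''(y) + 12φ''(y))·φ(y)² + a·(3y·φ'''(y)·φ(y) + 10φ''(y)·φ(y) − y·φ''(y)·φ'(y)) + 2a²·φ''(y)] holds. In particular, (4φ − yφ' + 2a)f₀ + yφ·f₀' = 0 on U if and only if φ satisfies the fourth-order ODE (y²φ'''' + 8yφ''' + 12φ'')φ² + a(3yφ'''φ + 10φ''φ − yφ''φ') + 2a²φ'' = 0 on U. -/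
/-!
Substituting `f₀ = −((yφ''' + 3φ'')φ + aφ'')/6` into `(4φ − yφ' + 2a)f₀ + yφf₀'` and expanding
`f₀' = −((4φ''' + yφ'''')φ + (yφ''' + 3φ'')φ' + aφ''')/6` turns six times the symmetry condition into
minus the fourth-order expression, a polynomial identity in `y, a, φ, …, φ''''`. Holomorphy on an open
set supplies the four derivatives, and since `6 ≠ 0` the two conditions vanish together.
-/

section

variable {𝕜 : Type*} [NontriviallyNormedField 𝕜]

noncomputable def symmetryCoeff (φ : 𝕜 → 𝕜) (a y : 𝕜) : 𝕜 :=
  -((y * deriv (deriv (deriv φ)) y + 3 * deriv (deriv φ) y) * φ y + a * deriv (deriv φ) y) / 6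

noncomputable def fourthOrderExpr (φ : 𝕜 → 𝕜) (a y : 𝕜) : 𝕜 :=
  (y ^ 2 * deriv (deriv (deriv (deriv φ))) y + 8 * y * deriv (deriv (deriv φ)) y
      + 12 * deriv (deriv φ) y) * (φ y) ^ 2
    + a * (3 * y * deriv (deriv (deriv φ)) y * φ y + 10 * deriv (deriv φ) y * φ y
        - y * deriv (deriv φ) y * deriv φ y)
    + 2 * a ^ 2 * deriv (deriv φ) y

variable {φ : 𝕜 → 𝕜} {a y : 𝕜}

theorem hasDerivAt_symmetryCoeff (h₀ : DifferentiableAt 𝕜 φ y)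
    (h₂ : DifferentiableAt 𝕜 (deriv (deriv φ)) y)
    (h₃ : DifferentiableAt 𝕜 (deriv (deriv (deriv φ))) y) :
    HasDerivAt (symmetryCoeff φ a)
      (-((4 * deriv (deriv (deriv φ)) y + y * deriv (deriv (deriv (deriv φ))) y) * φ y
          + (y * deriv (deriv (deriv φ)) y + 3 * deriv (deriv φ) y) * deriv φ y
          + a * deriv (deriv (deriv φ)) y) / 6) y := by
  refine ((((((hasDerivAt_id' y).mul h₃.hasDerivAt).add (h₂.hasDerivAt.const_mul 3)).mul
    h₀.hasDerivAt).add (h₂.hasDerivAt.const_mul a)).neg.div_const 6).congr_deriv ?_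
  simp only [Pi.add_apply, Pi.mul_apply]
  ring

theorem six_mul_symmetryCondition_eq_neg_fourthOrderExpr [CharZero 𝕜] (h₀ : DifferentiableAt 𝕜 φ y)
    (h₂ : DifferentiableAt 𝕜 (deriv (deriv φ)) y)
    (h₃ : DifferentiableAt 𝕜 (deriv (deriv (deriv φ))) y) :
    6 * ((4 * φ y - y * deriv φ y + 2 * a) * symmetryCoeff φ a y
        + y * φ y * deriv (symmetryCoeff φ a) y) = -fourthOrderExpr φ a y := by
  rw [(hasDerivAt_symmetryCoeff h₀ h₂ h₃).deriv, symmetryCoeff, fourthOrderExpr]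
  ring

theorem symmetryCondition_eq_zero_iff [CharZero 𝕜] (h₀ : DifferentiableAt 𝕜 φ y)
    (h₂ : DifferentiableAt 𝕜 (deriv (deriv φ)) y)
    (h₃ : DifferentiableAt 𝕜 (deriv (deriv (deriv φ))) y) :
    (4 * φ y - y * deriv φ y + 2 * a) * symmetryCoeff φ a y
        + y * φ y * deriv (symmetryCoeff φ a) y = 0 ↔ fourthOrderExpr φ a y = 0 := by
  rw [← neg_eq_zero (a := fourthOrderExpr φ a y),
    ← six_mul_symmetryCondition_eq_neg_fourthOrderExpr h₀ h₂ h₃, mul_eq_zero]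
  simp

end

/-- With `f₀ = −((yφ''' + 3φ'')φ + aφ'')/6`, the expression
`6·[(4φ − yφ' + 2a)f₀ + yφf₀']` equals
`−[(y²φ'''' + 8yφ''' + 12φ'')φ² + a(3yφ'''φ + 10φ''φ − yφ''φ') + 2a²φ'']`;
in particular the system `(4φ − yφ' + 2a)f₀ + yφf₀' = 0` is equivalent to the
fourth-order ODE `(y²φ'''' + 8yφ''' + 12φ'')φ² + a(3yφ'''φ + 10φ''φ − yφ''φ') + 2a²φ'' = 0`. -/
theorem fourth_order_ode_equivalence
    (U : Set ℂ) (hU : IsOpen U) (φ : ℂ → ℂ) (hφ : DifferentiableOn ℂ φ U) (a : ℂ) :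
    (fun f₀ : ℂ → ℂ =>
      (∀ y ∈ U,
        6 * ((4 * φ y - y * deriv φ y + 2 * a) * f₀ y + y * φ y * deriv f₀ y) =
          -((y ^ 2 * deriv (deriv (deriv (deriv φ))) y
              + 8 * y * deriv (deriv (deriv φ)) y
              + 12 * deriv (deriv φ) y) * (φ y) ^ 2
            + a * (3 * y * deriv (deriv (deriv φ)) y * φ y
                + 10 * deriv (deriv φ) y * φ y
                - y * deriv (deriv φ) y * deriv φ y)
            + 2 * a ^ 2 * deriv (deriv φ) y))
      ∧ ((∀ y ∈ U, (4 * φ y - y * deriv φ y + 2 * a) * f₀ y + y * φ y * deriv f₀ y = 0)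
          ↔ (∀ y ∈ U,
              (y ^ 2 * deriv (deriv (deriv (deriv φ))) y
                + 8 * y * deriv (deriv (deriv φ)) y
                + 12 * deriv (deriv φ) y) * (φ y) ^ 2
              + a * (3 * y * deriv (deriv (deriv φ)) y * φ y
                  + 10 * deriv (deriv φ) y * φ y
                  - y * deriv (deriv φ) y * deriv φ y)
              + 2 * a ^ 2 * deriv (deriv φ) y = 0)))
    (fun y => -((y * deriv (deriv (deriv φ)) y + 3 * deriv (deriv φ) y) * φ y
        + a * deriv (deriv φ) y) / 6) := by
  have hφ₂ := (hφ.deriv hU).deriv hU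
  have hdiff : ∀ y ∈ U, DifferentiableAt ℂ φ y ∧ DifferentiableAt ℂ (deriv (deriv φ)) y ∧
      DifferentiableAt ℂ (deriv (deriv (deriv φ))) y := fun y hy =>
    have hUy := hU.mem_nhds hy
    ⟨hφ.differentiableAt hUy, hφ₂.differentiableAt hUy, (hφ₂.deriv hU).differentiableAt hUy⟩
  refine ⟨fun y hy => ?_, forall₂_congr fun y hy => ?_⟩ <;> obtain ⟨h₀, h₂, h₃⟩ := hdiff y hy
  · exact six_mul_symmetryCondition_eq_neg_fourthOrderExpr h₀ h₂ h₃
  · exact symmetryCondition_eq_zero_iff h₀ h₂ h₃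
end

section
/- Let U ⊆ ℂ be a connected open set containing 0 and let φ : U → ℂ be holomorphic with (y²·φ''''(y) + 8y·φ'''(y) + 12φ''(y))·φ(y)² = 0 for all y ∈ U. Then φ''(y) = 0 for all y ∈ U. -/
open Filter Metric Set

/-- An analytic function with vanishing derivative on a preconnected open set is constant. -/
lemma aux_const_of_deriv_zero (U : Set ℂ) (hU : IsOpen U) (hUc : IsPreconnected U)
    {z₀ : ℂ} (hz : z₀ ∈ U) (f : ℂ → ℂ) (hf : AnalyticOnNhd ℂ f U)
    (hf' : ∀ y ∈ U, deriv f y = 0) : ∀ y ∈ U, f y = f z₀ := by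
  obtain ⟨r, hr, hball⟩ := Metric.isOpen_iff.1 hU z₀ hz
  have hconv : Convex ℝ (Metric.ball z₀ r) := convex_ball _ _
  have hdiff : DifferentiableOn ℂ f (Metric.ball z₀ r) := fun y hy =>
    (hf y (hball hy)).differentiableAt.differentiableWithinAt
  have hder : ∀ y ∈ Metric.ball z₀ r, fderivWithin ℂ f (Metric.ball z₀ r) y = 0 := by
    intro y hy
    rw [fderivWithin_of_isOpen Metric.isOpen_ball hy]
    ext
    simp [← toSpanSingleton_deriv, hf' y (hball hy)]
  have hev : f =ᶠ[nhds z₀] fun _ => f z₀ := by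
    filter_upwards [Metric.ball_mem_nhds z₀ hr] with y hy using
      hconv.is_const_of_fderivWithin_eq_zero hdiff hder hy (Metric.mem_ball_self hr)
  exact fun y hy => hf.eqOn_of_preconnected_of_eventuallyEq analyticOnNhd_const hUc hz hev hy

/-- Case `a = 0` of the fourth-order ODE: if `φ` is holomorphic on a connected open
set `U ∋ 0` and `(y²φ'''' + 8yφ''' + 12φ'')·φ² = 0` on `U`, then `φ'' = 0` on `U`. -/
theorem a_eq_zero_case_forces_phi_linear
    (U : Set ℂ) (hU : IsOpen U) (hUconn : IsConnected U) (h0 : (0 : ℂ) ∈ U)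
    (φ : ℂ → ℂ) (hφ : DifferentiableOn ℂ φ U)
    (hode : ∀ y ∈ U,
      (y ^ 2 * deriv (deriv (deriv (deriv φ))) y
        + 8 * y * deriv (deriv (deriv φ)) y
        + 12 * deriv (deriv φ) y) * (φ y) ^ 2 = 0) :
    ∀ y ∈ U, deriv (deriv φ) y = 0 := by
  have hUc : IsPreconnected U := hUconn.isPreconnected
  have A : AnalyticOnNhd ℂ φ U := hφ.analyticOnNhd hU
  have A2 : AnalyticOnNhd ℂ (deriv (deriv φ)) U := A.deriv.deriv
  have A3 : AnalyticOnNhd ℂ (deriv (deriv (deriv φ))) U := A2.deriv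
  have A4 : AnalyticOnNhd ℂ (deriv (deriv (deriv (deriv φ)))) U := A3.deriv
  by_cases hzero : Set.EqOn φ 0 U
  · -- φ ≡ 0 on U, hence φ'' = 0 on U
    intro y hy
    have hev : φ =ᶠ[nhds y] fun _ => (0 : ℂ) := by
      filter_upwards [hU.mem_nhds hy] with z hz using hzero hz
    have h1 : deriv φ =ᶠ[nhds y] deriv (fun _ => (0 : ℂ)) := hev.deriv
    have h1' : deriv φ =ᶠ[nhds y] fun _ => (0 : ℂ) := by
      filter_upwards [h1] with z hz using by simpa using hz
    have h2 : deriv (deriv φ) =ᶠ[nhds y] deriv (fun _ => (0 : ℂ)) := h1'.deriv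
    have := h2.eq_of_nhds
    simpa using this
  · -- φ not identically zero: the ODE factor vanishes on U
    set F : ℂ → ℂ := fun y => y ^ 2 * deriv (deriv (deriv (deriv φ))) y
        + 8 * y * deriv (deriv (deriv φ)) y + 12 * deriv (deriv φ) y with hF
    have hF0 : ∀ y ∈ U, F y = 0 := by
      intro y hy
      have hne : ∀ᶠ z in nhdsWithin y {y}ᶜ, φ z ≠ 0 := by
        by_contra hcon
        rw [Filter.not_eventually] at hcon
        push_neg at hcon
        exact hzero (A.eqOn_zero_of_preconnected_of_frequently_eq_zero hUc hy hcon)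
      have hUev : ∀ᶠ z in nhdsWithin y {y}ᶜ, z ∈ U :=
        mem_nhdsWithin_of_mem_nhds (hU.mem_nhds hy)
      have hFz : ∀ᶠ z in nhdsWithin y {y}ᶜ, F z = 0 := by
        filter_upwards [hne, hUev] with z hz hzU
        have := hode z hzU
        rcases mul_eq_zero.1 this with h | h
        · exact h
        · exact (hz ((pow_eq_zero_iff two_ne_zero).1 h)).elim
      have hc2 : ContinuousAt (deriv (deriv φ)) y := (A2 y hy).differentiableAt.continuousAt
      have hc3 : ContinuousAt (deriv (deriv (deriv φ))) y := (A3 y hy).differentiableAt.continuousAt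
      have hc4 : ContinuousAt (deriv (deriv (deriv (deriv φ)))) y :=
        (A4 y hy).differentiableAt.continuousAt
      have hcF : ContinuousAt F y := by
        apply ContinuousAt.add
        apply ContinuousAt.add
        · exact (continuousAt_id.pow 2).mul hc4
        · exact (continuousAt_const.mul continuousAt_id).mul hc3
        · exact continuousAt_const.mul hc2
      have ht1 : Tendsto F (nhdsWithin y {y}ᶜ) (nhds (F y)) :=
        hcF.continuousWithinAt.tendsto
      have ht2 : Tendsto F (nhdsWithin y {y}ᶜ) (nhds 0) :=
        Tendsto.congr' (by filter_upwards [hFz] with z hz using hz.symm) tendsto_const_nhds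
      exact tendsto_nhds_unique ht1 ht2
    -- g(y) = y⁴ φ''(y); show g'' = 0 on U
    set g : ℂ → ℂ := fun y => y ^ 4 * deriv (deriv φ) y with hg
    set g1 : ℂ → ℂ := fun y => 4 * y ^ 3 * deriv (deriv φ) y
        + y ^ 4 * deriv (deriv (deriv φ)) y with hg1
    have hgderiv : ∀ y ∈ U, HasDerivAt g (g1 y) y := by
      intro y hy
      have := (hasDerivAt_pow 4 y).mul ((A2 y hy).differentiableAt.hasDerivAt)
      exact this.congr_deriv (by simp only [hg1]; norm_num)
    have hderivg_eq : ∀ y ∈ U, deriv g =ᶠ[nhds y] g1 := by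
      intro y hy
      filter_upwards [hU.mem_nhds hy] with z hz using (hgderiv z hz).deriv
    have hg1deriv : ∀ y ∈ U, HasDerivAt g1
        (12 * y ^ 2 * deriv (deriv φ) y + 8 * y ^ 3 * deriv (deriv (deriv φ)) y
          + y ^ 4 * deriv (deriv (deriv (deriv φ))) y) y := by
      intro y hy
      have h1 := ((hasDerivAt_pow 3 y).const_mul (4 : ℂ)).mul
        ((A2 y hy).differentiableAt.hasDerivAt)
      have h2 := (hasDerivAt_pow 4 y).mul ((A3 y hy).differentiableAt.hasDerivAt)
      have := h1.add h2
      exact this.congr_deriv (by push_cast; ring)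
    have hgg : ∀ y ∈ U, deriv (deriv g) y = 0 := by
      intro y hy
      have hd : HasDerivAt (deriv g)
          (12 * y ^ 2 * deriv (deriv φ) y + 8 * y ^ 3 * deriv (deriv (deriv φ)) y
            + y ^ 4 * deriv (deriv (deriv (deriv φ))) y) y :=
        (hg1deriv y hy).congr_of_eventuallyEq (hderivg_eq y hy)
      rw [hd.deriv]
      have := hF0 y hy
      rw [hF] at this
      linear_combination y ^ 2 * this
    -- deriv g is constant on U
    have Ag : AnalyticOnNhd ℂ g U := ((analyticOnNhd_id (𝕜 := ℂ)).pow 4).mul A2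
    have hconst : ∀ y ∈ U, deriv g y = deriv g 0 :=
      aux_const_of_deriv_zero U hU hUc h0 (deriv g) Ag.deriv hgg
    set c : ℂ := deriv g 0 with hc
    -- g(y) = c y on U
    have hf2 : ∀ y ∈ U, g y - c * y = 0 := by
      have hAf2 : AnalyticOnNhd ℂ (fun y => g y - c * y) U :=
        Ag.sub (analyticOnNhd_const.mul (analyticOnNhd_id (𝕜 := ℂ)))
      have hder : ∀ y ∈ U, deriv (fun y => g y - c * y) y = 0 := by
        intro y hy
        have hd : HasDerivAt (fun y => g y - c * y) (g1 y - c * 1) y :=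
          (hgderiv y hy).sub ((hasDerivAt_id y).const_mul c)
        rw [hd.deriv]
        have : g1 y = c := by rw [← (hgderiv y hy).deriv, hconst y hy]
        rw [this]; ring
      have := aux_const_of_deriv_zero U hU hUc h0 _ hAf2 hder
      intro y hy
      have h00 : g 0 - c * 0 = 0 := by simp [hg]
      rw [this y hy, h00]
    -- c = 0 via limit at 0
    have hc0 : c = 0 := by
      have hcont : ContinuousAt (fun y : ℂ => y ^ 3 * deriv (deriv φ) y) 0 :=
        (continuousAt_id.pow 3).mul (A2 0 h0).differentiableAt.continuousAt
      have ht1 : Tendsto (fun y : ℂ => y ^ 3 * deriv (deriv φ) y)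
          (nhdsWithin 0 {(0 : ℂ)}ᶜ) (nhds 0) := by
        have h := (hcont.continuousWithinAt (s := {(0 : ℂ)}ᶜ)).tendsto
        simpa using h
      have hev : (fun _ : ℂ => c) =ᶠ[nhdsWithin 0 {(0 : ℂ)}ᶜ]
          fun y => y ^ 3 * deriv (deriv φ) y := by
        filter_upwards [self_mem_nhdsWithin, mem_nhdsWithin_of_mem_nhds (hU.mem_nhds h0)]
          with y hy hyU
        have hgy := hf2 y hyU
        have hy0 : y ≠ 0 := hy
        have hgy' : y ^ 4 * deriv (deriv φ) y - c * y = 0 := by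
          simpa [hg] using hgy
        have : y * (y ^ 3 * deriv (deriv φ) y) = y * c := by
          linear_combination hgy'
        exact (mul_left_cancel₀ hy0 this).symm
      have ht2 : Tendsto (fun y : ℂ => y ^ 3 * deriv (deriv φ) y)
          (nhdsWithin 0 {(0 : ℂ)}ᶜ) (nhds c) :=
        Tendsto.congr' hev tendsto_const_nhds
      exact tendsto_nhds_unique ht2 ht1
    -- conclude
    have hzero4 : ∀ y ∈ U, y ^ 4 * deriv (deriv φ) y = 0 := by
      intro y hy
      have := hf2 y hy
      rw [hc0] at this
      have hgy : g y = 0 := by linear_combination this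
      simpa [hg] using hgy
    intro y hy
    by_cases hy0 : y = 0
    · subst hy0
      have hcont : ContinuousAt (deriv (deriv φ)) 0 := (A2 0 h0).differentiableAt.continuousAt
      have hevz : ∀ᶠ z in nhdsWithin 0 {(0 : ℂ)}ᶜ, deriv (deriv φ) z = 0 := by
        filter_upwards [self_mem_nhdsWithin, mem_nhdsWithin_of_mem_nhds (hU.mem_nhds h0)]
          with z hz hzU
        have := hzero4 z hzU
        exact (mul_eq_zero.1 this).resolve_left (pow_ne_zero 4 hz)
      have ht1 : Tendsto (deriv (deriv φ)) (nhdsWithin 0 {(0 : ℂ)}ᶜ)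
          (nhds (deriv (deriv φ) 0)) := hcont.continuousWithinAt.tendsto
      have ht2 : Tendsto (deriv (deriv φ)) (nhdsWithin 0 {(0 : ℂ)}ᶜ) (nhds 0) :=
        Tendsto.congr' (by filter_upwards [hevz] with z hz using hz.symm) tendsto_const_nhds
      exact tendsto_nhds_unique ht1 ht2
    · exact (mul_eq_zero.1 (hzero4 y hy)).resolve_left (pow_ne_zero 4 hy0)
end

section
/- Let a, b, c, d ∈ ℂ, let U ⊆ ℂ be open, and let u : U → ℂ be holomorphic with u''(t) = (ad − bc)²·(u(t) − (t+1)·u'(t))³ for all t ∈ U. Define X(t) = a(t+1) + c·u(t) and Y(t) = b(t+1) + d·u(t). Then for all t ∈ U: X'(t)·Y''(t) − Y'(t)·X''(t) = (Y(t)·X'(t) − X(t)·Y'(t))³. In other words, the affine map (x₁,y₁) ↦ (a(x₁+1) + c y₁, b(x₁+1) + d y₁) carries solutions of the shifted quartic ODE y'' = (ad−bc)²(y − (x+1)y')³ to solution curves of the quartic ODE y'' = (y − x y')³. -/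
/-- The affine map `(x₁,y₁) ↦ (a(x₁+1) + c y₁, b(x₁+1) + d y₁)` carries solutions of
the shifted quartic ODE `y'' = (ad−bc)²(y − (x+1)y')³` to solution curves of the
quartic ODE `y'' = (y − x y')³`. -/
theorem affine_map_carries_shifted_quartic_solutions
    (a b c d : ℂ) (U : Set ℂ) (hU : IsOpen U)
    (u : ℂ → ℂ) (hu : DifferentiableOn ℂ u U)
    (hode : ∀ t ∈ U, deriv (deriv u) t =
      (a * d - b * c) ^ 2 * (u t - (t + 1) * deriv u t) ^ 3) :
    ∀ t ∈ U,
      (fun X Y : ℂ → ℂ =>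
        deriv X t * deriv (deriv Y) t - deriv Y t * deriv (deriv X) t =
          (Y t * deriv X t - X t * deriv Y t) ^ 3)
      (fun t => a * (t + 1) + c * u t) (fun t => b * (t + 1) + d * u t) := by
  have hAn : AnalyticOnNhd ℂ u U := hu.analyticOnNhd hU
  have hu' : DifferentiableOn ℂ (deriv u) U := hAn.deriv.differentiableOn
  have key : ∀ (e f : ℂ), ∀ t ∈ U,
      HasDerivAt (fun s => e * (s + 1) + f * u s) (e + f * deriv u t) t := by
    intro e f s hs
    have hus : DifferentiableAt ℂ u s := hu.differentiableAt (hU.mem_nhds hs)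
    have h1 := ((hasDerivAt_id s).add_const 1).const_mul e
    have h2 : HasDerivAt (fun y => e * (y + 1) + f * u y) (e * 1 + f * deriv u s) s :=
      h1.add (hus.hasDerivAt.const_mul f)
    simpa using h2
  have key2 : ∀ (e f : ℂ), ∀ t ∈ U,
      deriv (deriv (fun s => e * (s + 1) + f * u s)) t = f * deriv (deriv u) t := by
    intro e f t ht
    have hE : (deriv (fun s => e * (s + 1) + f * u s)) =ᶠ[nhds t]
        (fun s => e + f * deriv u s) := by
      filter_upwards [hU.mem_nhds ht] with s hs using (key e f s hs).deriv
    rw [hE.deriv_eq]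
    have hus : DifferentiableAt ℂ (deriv u) t := hu'.differentiableAt (hU.mem_nhds ht)
    exact ((hus.hasDerivAt.const_mul f).const_add e).deriv
  intro t ht
  simp only
  rw [(key a c t ht).deriv, (key b d t ht).deriv, key2 a c t ht, key2 b d t ht,
    hode t ht]
  ring
end

section
/- Let α, β, δ ∈ ℂ with (α, β, δ) ≠ (0, 0, 0), and consider the vector field V(x,y,p) = (αx + βy, δx − αy, δ − 2αp − βp²) on ℂ³ (the lift to (x,y,p)-space of the infinitesimal automorphism (αx+βy)∂/∂x + (δx−αy)∂/∂y of the quartic ODE y'' = (y − x y')³). If (x, y, p) ∈ ℂ³ satisfies V(x,y,p) = (0,0,0) and (x,y) ≠ (0,0), then α² + βδ = 0, β ≠ 0, p = −α/β, and y = x·p. In particular, if the discriminant α² + βδ is nonzero, every zero of V has x = y = 0, and all zeros of V with (x,y) ≠ (0,0) lie on the hypersurface {y = xp}. -/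
/-!
Eliminating `x` and `y` from the first two components shows that the discriminant `α² + βδ`
annihilates the nonzero vector `(x, y)`, so it vanishes. The third component, multiplied by `β`,
is then `-(α + βp)²`, so `p` is the double root `-α/β` of the Riccati quadratic, and the first
component becomes `β (y - x p) = 0`. Finally `β = 0` would force `α = 0` and then `δ = 0`.
-/

section QuarticIsotropy

variable {R : Type*} [CommRing R] [NoZeroDivisors R] {α β δ : R}

theorem sq_add_mul_eq_zero_of_kernel {x y : R} (h1 : α * x + β * y = 0)
    (h2 : δ * x - α * y = 0) (hxy : (x, y) ≠ (0, 0)) : α ^ 2 + β * δ = 0 := by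
  have hx : (α ^ 2 + β * δ) * x = 0 := by linear_combination α * h1 + β * h2
  have hy : (α ^ 2 + β * δ) * y = 0 := by linear_combination δ * h1 - α * h2
  by_contra hdisc
  exact hxy (Prod.ext ((mul_eq_zero.mp hx).resolve_left hdisc)
    ((mul_eq_zero.mp hy).resolve_left hdisc))

theorem add_mul_eq_zero_of_riccati {p : R} (hdisc : α ^ 2 + β * δ = 0)
    (h3 : δ - 2 * α * p - β * p ^ 2 = 0) : α + β * p = 0 :=
  pow_eq_zero_iff two_ne_zero |>.mp <| by linear_combination hdisc - β * h3

theorem ne_zero_of_riccati {p : R} (hne : (α, β, δ) ≠ (0, 0, 0))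
    (hdisc : α ^ 2 + β * δ = 0) (h3 : δ - 2 * α * p - β * p ^ 2 = 0) : β ≠ 0 := by
  rintro rfl
  have hα : α = 0 := pow_eq_zero_iff two_ne_zero |>.mp <| by linear_combination hdisc
  have hδ : δ = 0 := by linear_combination h3 + 2 * p * hα
  exact hne (by simp [hα, hδ])

end QuarticIsotropy

/-- Zero-set analysis of the lifted infinitesimal automorphisms
`V(x,y,p) = (αx + βy, δx − αy, δ − 2αp − βp²)` of the quartic: any zero of `V`
with `(x,y) ≠ (0,0)` forces `α² + βδ = 0`, `β ≠ 0`, `p = −α/β` and lies on the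
hypersurface `{y = xp}`. -/
theorem quartic_isotropy_fixed_points
    (α β δ : ℂ) (hne : (α, β, δ) ≠ (0, 0, 0)) (x y p : ℂ)
    (h1 : α * x + β * y = 0) (h2 : δ * x - α * y = 0)
    (h3 : δ - 2 * α * p - β * p ^ 2 = 0)
    (hxy : (x, y) ≠ (0, 0)) :
    α ^ 2 + β * δ = 0 ∧ β ≠ 0 ∧ p = -α / β ∧ y = x * p := by
  have hdisc := sq_add_mul_eq_zero_of_kernel h1 h2 hxy
  have hβ := ne_zero_of_riccati hne hdisc h3
  have hp := add_mul_eq_zero_of_riccati hdisc h3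
  refine ⟨hdisc, hβ, ?_, ?_⟩
  · rw [eq_div_iff hβ]
    linear_combination hp
  · exact mul_left_cancel₀ hβ (by linear_combination h1 - x * hp)
end
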